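/- arXiv:1201.5168 — 2 statements merged into one kernel-verified Lean document; each statement's English description precedes it below -/
import Mathlib

section
/- Suppose T1 is a rooted balanced binary phylogenetic tree on a leaf-set of cardinality 2^m, and T2 is an arbitrary rooted binary phylogenetic tree on t > 0 leaves with L(T2) ⊆ L(T1). Then for every δ ∈ (0, 1/2), mast{T1, T2} ≥ (m·log(1−δ) + log t)/(1 − log δ). -/
/-!
# Rooted binary phylogenetic trees

`RTree L` is the type of rooted binary trees with leaves labelled by elements of `L`:
every internal vertex has exactly two children (a left child and a right child), and
a tree with one leaf is a single vertex.
-/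

inductive RTree (L : Type) : Type
  | leaf : L → RTree L
  | node : RTree L → RTree L → RTree L

namespace RTree

variable {L : Type}

/-- The list of leaf labels of a rooted binary tree, read from left to right. -/
def leafList : RTree L → List L
  | leaf b => [b]
  | node l r => leafList l ++ leafList r

/-- The number of leaves of a rooted binary tree. -/
def numLeaves (T : RTree L) : ℕ := T.leafList.length

/-- The set of leaf labels of a rooted binary tree. -/
def leafSet (T : RTree L) : Set L := {b | b ∈ T.leafList}

/-- The height of a rooted binary tree: the maximum distance from the root to a leaf. -/
def height : RTree L → ℕ
  | leaf _ => 0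
  | node l r => max (height l) (height r) + 1

/-- A rooted binary tree is balanced if all of its leaves are at the same distance
from the root. -/
def IsBalanced : RTree L → Prop
  | leaf _ => True
  | node l r => IsBalanced l ∧ IsBalanced r ∧ height l = height r

/-- A rooted binary tree is phylogenetic if its leaves are labelled bijectively by a
finite set, i.e. all leaf labels are distinct. -/
def IsPhylo (T : RTree L) : Prop := T.leafList.Nodup

/-- `Embeds S T` is the subtree relation `S ⪯ T`: there is an injective map `f` from the
vertices of `S` to the vertices of `T` such that `f x = x` for every leaf `x` of `S`
(leaves being identified across trees by their labels) and
`f (x ∧ y) = f x ∧ f y` for all vertices `x`, `y` of `S`, where `∧` denotes the most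
recent common ancestor.  Equivalently (for trees with distinct leaf labels), `S` is the
restriction of `T` to the leaf set of `S`, up to rooted isomorphism; this structural
characterization is taken as the definition. -/
inductive Embeds : RTree L → RTree L → Prop
  | leaf (b : L) : Embeds (RTree.leaf b) (RTree.leaf b)
  | left {S l r : RTree L} : Embeds S l → Embeds S (RTree.node l r)
  | right {S l r : RTree L} : Embeds S r → Embeds S (RTree.node l r)
  | pair {s₁ s₂ l r : RTree L} :
      Embeds s₁ l → Embeds s₂ r → Embeds (RTree.node s₁ s₂) (RTree.node l r)
  | pair_swap {s₁ s₂ l r : RTree L} :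
      Embeds s₁ r → Embeds s₂ l → Embeds (RTree.node s₁ s₂) (RTree.node l r)

/-- `mast T₁ T₂` is the maximum cardinality of a subset `X ⊆ L(T₁) ∩ L(T₂)` such that
the restrictions `T₁|X` and `T₂|X` are isomorphic; equivalently, the maximum number of
leaves of a rooted binary phylogenetic tree `S` with `S ⪯ T₁` and `S ⪯ T₂`. -/
noncomputable def mast (T₁ T₂ : RTree L) : ℕ :=
  sSup {n | ∃ S : RTree L, S.IsPhylo ∧ Embeds S T₁ ∧ Embeds S T₂ ∧ S.numLeaves = n}

end RTree

/-!
Descend along the balanced tree `T₁` keeping track of `k`, the number of leaves of `T₂`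
lying below the current vertex `node A B` of `T₁`. If one child, say `A`, still carries a
`(1 - δ)`-fraction of these leaves, move to it: the height drops by one and `k` by at most
a factor `1 - δ`. Otherwise both `A` and `B` carry more than `δ k` of them, and a walk down
`T₂` finds siblings `C`, `D` of `T₂` such that (up to swapping `A` and `B`) `C` has at least
`δ k / 2` leaves in `A` and `D` has a leaf `x` in `B`; an agreement subtree `S` of `A` and `C`
then extends to the agreement subtree `node S (leaf x)` of `node A B` and `T₂`, gaining a
leaf while `k` drops by at most a factor `δ / 2`. Both moves preserve
`(1 - δ)^height · k ≤ (2 / δ)^|S|`, which is the claimed bound after taking logarithms.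
-/

theorem List.countP_or_eq_add {α : Type*} {p q : α → Bool} {l : List α}
    (h : ∀ x ∈ l, ¬(p x ∧ q x)) :
    l.countP (fun x => p x || q x) = l.countP p + l.countP q := by
  induction l with
  | nil => rfl
  | cons a l ih =>
    simp only [List.mem_cons, forall_eq_or_imp] at h
    simp only [List.countP_cons, ih h.2]
    cases hp : p a <;> cases hq : q a <;> simp_all <;> omega

namespace RTree

variable {L : Type}

lemma numLeaves_node (l r : RTree L) : (node l r).numLeaves = l.numLeaves + r.numLeaves :=
  List.length_append

lemma isPhylo_node {l r : RTree L} :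
    (node l r).IsPhylo ↔
      l.IsPhylo ∧ r.IsPhylo ∧ ∀ a ∈ l.leafList, ∀ b ∈ r.leafList, a ≠ b :=
  List.nodup_append

lemma numLeaves_eq_two_pow_height {T : RTree L} (h : T.IsBalanced) :
    T.numLeaves = 2 ^ T.height := by
  induction T with
  | leaf b => rfl
  | node l r ihl ihr =>
    obtain ⟨hl, hr, hlr⟩ := h
    rw [numLeaves_node, ihl hl, ihr hr, height, hlr, max_self, pow_succ, mul_two]

lemma embeds_leaf_of_mem {x : L} {T : RTree L} (h : x ∈ T.leafList) : Embeds (leaf x) T := by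
  induction T with
  | leaf b =>
    rw [List.mem_singleton.mp h]
    exact .leaf b
  | node l r ihl ihr =>
    rcases List.mem_append.mp h with h | h
    · exact .left (ihl h)
    · exact .right (ihr h)

lemma Embeds.leafList_subset {S T : RTree L} (h : Embeds S T) : S.leafList ⊆ T.leafList := by
  induction h with
  | leaf b => exact List.Subset.refl _
  | left _ ih => exact List.Subset.trans ih (List.subset_append_left _ _)
  | right _ ih => exact List.Subset.trans ih (List.subset_append_right _ _)
  | pair _ _ ih₁ ih₂ =>
    exact List.append_subset.mpr ⟨List.Subset.trans ih₁ (List.subset_append_left _ _),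
      List.Subset.trans ih₂ (List.subset_append_right _ _)⟩
  | pair_swap _ _ ih₁ ih₂ =>
    exact List.append_subset.mpr ⟨List.Subset.trans ih₁ (List.subset_append_right _ _),
      List.Subset.trans ih₂ (List.subset_append_left _ _)⟩

lemma Embeds.numLeaves_le {S T : RTree L} (h : Embeds S T) : S.numLeaves ≤ T.numLeaves := by
  induction h with
  | leaf b => exact le_rfl
  | left _ ih => rw [numLeaves_node]; omega
  | right _ ih => rw [numLeaves_node]; omega
  | pair _ _ ih₁ ih₂ => rw [numLeaves_node, numLeaves_node]; omega
  | pair_swap _ _ ih₁ ih₂ => rw [numLeaves_node, numLeaves_node]; omega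

lemma Embeds.node_comm {S A B : RTree L} (h : Embeds S (node A B)) : Embeds S (node B A) := by
  cases h with
  | left h => exact .right h
  | right h => exact .left h
  | pair h₁ h₂ => exact .pair_swap h₁ h₂
  | pair_swap h₁ h₂ => exact .pair h₁ h₂

def IsAgreementSubtree (S T₁ T₂ : RTree L) : Prop :=
  S.IsPhylo ∧ Embeds S T₁ ∧ Embeds S T₂

lemma IsAgreementSubtree.numLeaves_le_mast {S T₁ T₂ : RTree L}
    (h : IsAgreementSubtree S T₁ T₂) : S.numLeaves ≤ mast T₁ T₂ := by
  refine le_csSup ⟨T₁.numLeaves, ?_⟩ ⟨S, h.1, h.2.1, h.2.2, rfl⟩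
  rintro n ⟨S', -, hS'₁, -, rfl⟩
  exact hS'₁.numLeaves_le

lemma exists_siblings_of_le_countP {p q : L → Bool} (hpq : ∀ x, ¬(p x ∧ q x))
    {s : ℝ} (hs : 0 < s) {T : RTree L} (hT : T.IsPhylo)
    (hp : s ≤ T.leafList.countP p) (hq : 2 * s ≤ T.leafList.countP q) :
    ∃ C D : RTree L,
      (∀ S₁ S₂, Embeds S₁ C → Embeds S₂ D → Embeds (node S₁ S₂) T) ∧ C.IsPhylo ∧
      ((s ≤ C.leafList.countP p ∧ 0 < D.leafList.countP q) ∨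
        (s ≤ C.leafList.countP q ∧ 0 < D.leafList.countP p)) := by
  induction T with
  | leaf x =>
    have hpx : 0 < [x].countP p := by exact_mod_cast hs.trans_le hp
    have hqx : 0 < [x].countP q := by
      exact_mod_cast (show (0 : ℝ) < 2 * s by positivity).trans_le hq
    simp only [List.countP_pos_iff, List.mem_singleton, exists_eq_left] at hpx hqx
    exact absurd ⟨hpx, hqx⟩ (hpq x)
  | node U V ihU ihV =>
    obtain ⟨hU, hV, -⟩ := isPhylo_node.mp hT
    simp only [leafList, List.countP_append, Nat.cast_add] at hp hq
    by_cases hpU : s ≤ U.leafList.countP p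
    · rcases Nat.eq_zero_or_pos (V.leafList.countP q) with hqV | hqV
      · obtain ⟨C, D, hCD, hC, hcount⟩ := ihU hU hpU (by simpa [hqV] using hq)
        exact ⟨C, D, fun S₁ S₂ h₁ h₂ => .left (hCD S₁ S₂ h₁ h₂), hC, hcount⟩
      · exact ⟨U, V, fun _ _ => .pair, hU, .inl ⟨hpU, hqV⟩⟩
    by_cases hpV : s ≤ V.leafList.countP p
    · rcases Nat.eq_zero_or_pos (U.leafList.countP q) with hqU | hqU
      · obtain ⟨C, D, hCD, hC, hcount⟩ := ihV hV hpV (by simpa [hqU] using hq)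
        exact ⟨C, D, fun S₁ S₂ h₁ h₂ => .right (hCD S₁ S₂ h₁ h₂), hC, hcount⟩
      · exact ⟨V, U, fun _ _ => .pair_swap, hV, .inl ⟨hpV, hqU⟩⟩
    -- neither child has `s` leaves satisfying `p`, so each has one,
    -- and one of them has `s` leaves satisfying `q`
    push Not at hpU hpV
    have hpU' : 0 < U.leafList.countP p := by
      exact_mod_cast (show (0 : ℝ) < U.leafList.countP p by linarith)
    have hpV' : 0 < V.leafList.countP p := by
      exact_mod_cast (show (0 : ℝ) < V.leafList.countP p by linarith)
    by_cases hqU : s ≤ U.leafList.countP q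
    · exact ⟨U, V, fun _ _ => .pair, hU, .inr ⟨hqU, hpV'⟩⟩
    · exact ⟨V, U, fun _ _ => .pair_swap, hV, .inr ⟨by linarith [not_le.mp hqU], hpU'⟩⟩

section Counting

variable [DecidableEq L]

def countLeavesIn (T X : RTree L) : ℕ := T.leafList.countP (· ∈ X.leafList)

lemma countLeavesIn_leaf_le_one {T : RTree L} (hT : T.IsPhylo) (y : L) :
    T.countLeavesIn (leaf y) ≤ 1 := by
  have hcount : T.countLeavesIn (leaf y) = T.leafList.count y :=
    List.countP_congr fun _ _ => by simp [leafList]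
  exact hcount ▸ List.nodup_iff_count_le_one.mp hT y

lemma countLeavesIn_node {T A B : RTree L}
    (hAB : ∀ a ∈ A.leafList, ∀ b ∈ B.leafList, a ≠ b) :
    T.countLeavesIn (node A B) = T.countLeavesIn A + T.countLeavesIn B := by
  unfold countLeavesIn
  rw [← List.countP_or_eq_add fun x _ ⟨hA, hB⟩ =>
    hAB x (of_decide_eq_true hA) x (of_decide_eq_true hB) rfl]
  exact List.countP_congr fun x _ => by simp [leafList]

lemma countLeavesIn_node_comm (T A B : RTree L) :
    T.countLeavesIn (node A B) = T.countLeavesIn (node B A) :=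
  List.countP_congr fun x _ => by simp [leafList, or_comm]

lemma countLeavesIn_eq_numLeaves {T X : RTree L} (h : T.leafSet ⊆ X.leafSet) :
    T.countLeavesIn X = T.numLeaves :=
  List.countP_eq_length.mpr fun _ hx => decide_eq_true (h hx)

/-- `(1 - δ)^h · k ≤ (2 / δ)^|S|`, for `k` the number of leaves of `T₂` in `T₁`, is the bound
`|S| ≥ (h log(1 - δ) + log k) / (1 - log δ)` with the logarithms undone. -/
def HasLargeAgreementSubtree (δ : ℝ) (h : ℕ) (T₁ T₂ : RTree L) : Prop :=
  ∃ S, IsAgreementSubtree S T₁ T₂ ∧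
    (1 - δ) ^ h * (T₂.countLeavesIn T₁ : ℝ) ≤ (2 / δ) ^ S.numLeaves

variable {δ : ℝ} {h : ℕ} {A B T₂ : RTree L}

lemma HasLargeAgreementSubtree.node_comm (hBA : HasLargeAgreementSubtree δ h (node B A) T₂) :
    HasLargeAgreementSubtree δ h (node A B) T₂ := by
  obtain ⟨S, ⟨hS, hS₁, hS₂⟩, hbound⟩ := hBA
  exact ⟨S, ⟨hS, hS₁.node_comm, hS₂⟩, countLeavesIn_node_comm T₂ A B ▸ hbound⟩

lemma HasLargeAgreementSubtree.node_of_left (hδ₁ : δ ≤ 1) (hA : HasLargeAgreementSubtree δ h A T₂)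
    (hk : (1 - δ) * T₂.countLeavesIn (node A B) ≤ T₂.countLeavesIn A) :
    HasLargeAgreementSubtree δ (h + 1) (node A B) T₂ := by
  obtain ⟨S, ⟨hS, hS₁, hS₂⟩, hbound⟩ := hA
  refine ⟨S, ⟨hS, .left hS₁, hS₂⟩, ?_⟩
  calc (1 - δ) ^ (h + 1) * (T₂.countLeavesIn (node A B) : ℝ)
      = (1 - δ) ^ h * ((1 - δ) * T₂.countLeavesIn (node A B)) := by ring
    _ ≤ (1 - δ) ^ h * T₂.countLeavesIn A := by gcongr
    _ ≤ (2 / δ) ^ S.numLeaves := hbound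

lemma HasLargeAgreementSubtree.node_of_siblings (hδ₀ : 0 < δ) (hδ₁ : δ ≤ 1)
    (hAB : ∀ a ∈ A.leafList, ∀ b ∈ B.leafList, a ≠ b) {C D : RTree L}
    (hCD : ∀ S₁ S₂, Embeds S₁ C → Embeds S₂ D → Embeds (node S₁ S₂) T₂)
    (hA : HasLargeAgreementSubtree δ h A C) {x : L} (hxD : x ∈ D.leafList)
    (hxB : x ∈ B.leafList) (hk : δ * T₂.countLeavesIn (node A B) / 2 ≤ C.countLeavesIn A) :
    HasLargeAgreementSubtree δ (h + 1) (node A B) T₂ := by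
  obtain ⟨S, ⟨hS, hSA, hSC⟩, hbound⟩ := hA
  have hSx : (node S (leaf x)).IsPhylo :=
    isPhylo_node.mpr ⟨hS, List.nodup_singleton x, fun a ha b hb =>
      List.mem_singleton.mp hb ▸ hAB a (hSA.leafList_subset ha) x hxB⟩
  refine ⟨node S (leaf x), ⟨hSx, .pair hSA (embeds_leaf_of_mem hxB),
    hCD _ _ hSC (embeds_leaf_of_mem hxD)⟩, ?_⟩
  calc (1 - δ) ^ (h + 1) * (T₂.countLeavesIn (node A B) : ℝ)
      ≤ (1 - δ) ^ h * T₂.countLeavesIn (node A B) := by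
        gcongr ?_ * _
        exact pow_le_pow_of_le_one (by linarith) (by linarith) h.le_succ
    _ = 2 / δ * ((1 - δ) ^ h * (δ * T₂.countLeavesIn (node A B) / 2)) := by field_simp
    _ ≤ 2 / δ * ((1 - δ) ^ h * C.countLeavesIn A) := by gcongr
    _ ≤ 2 / δ * (2 / δ) ^ S.numLeaves := by gcongr
    _ = (2 / δ) ^ (node S (leaf x)).numLeaves := by
        rw [numLeaves_node, show (leaf x).numLeaves = 1 from rfl, pow_succ']

lemma hasLargeAgreementSubtree_node (hδ₀ : 0 < δ) (hδ₁ : δ < 1)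
    (hAB : ∀ a ∈ A.leafList, ∀ b ∈ B.leafList, a ≠ b)
    (ihA : ∀ T, T.IsPhylo → 0 < T.countLeavesIn A → HasLargeAgreementSubtree δ h A T)
    (ihB : ∀ T, T.IsPhylo → 0 < T.countLeavesIn B → HasLargeAgreementSubtree δ h B T)
    (h₂ : T₂.IsPhylo) (hk : 0 < T₂.countLeavesIn (node A B)) :
    HasLargeAgreementSubtree δ (h + 1) (node A B) T₂ := by
  have hk' : (0 : ℝ) < T₂.countLeavesIn (node A B) := by exact_mod_cast hk
  have hsum : (T₂.countLeavesIn (node A B) : ℝ) = T₂.countLeavesIn A + T₂.countLeavesIn B := by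
    exact_mod_cast countLeavesIn_node hAB
  have hδk : 0 < (1 - δ) * T₂.countLeavesIn (node A B) := mul_pos (by linarith) hk'
  by_cases hA : (1 - δ) * T₂.countLeavesIn (node A B) ≤ T₂.countLeavesIn A
  · exact (ihA T₂ h₂ (by exact_mod_cast hδk.trans_le hA)).node_of_left hδ₁.le hA
  by_cases hB : (1 - δ) * T₂.countLeavesIn (node A B) ≤ T₂.countLeavesIn B
  · refine .node_comm ((ihB T₂ h₂ (by exact_mod_cast hδk.trans_le hB)).node_of_left hδ₁.le ?_)
    rwa [← countLeavesIn_node_comm]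
  push Not at hA hB
  have hs : 0 < δ * T₂.countLeavesIn (node A B) / 2 := by positivity
  have hpq : ∀ x, ¬(decide (x ∈ A.leafList) ∧ decide (x ∈ B.leafList)) := by
    simpa only [decide_eq_true_eq, not_and] using fun x hxA hxB => hAB x hxA x hxB rfl
  obtain ⟨C, D, hCD, hC, ⟨hCA, hDB⟩ | ⟨hCB, hDA⟩⟩ :=
    exists_siblings_of_le_countP hpq hs h₂ (show _ ≤ (T₂.countLeavesIn A : ℝ) by linarith)
      (show _ ≤ (T₂.countLeavesIn B : ℝ) by linarith)
  · obtain ⟨x, hxD, hxB⟩ := List.countP_pos_iff.mp hDB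
    exact (ihA C hC (by exact_mod_cast hs.trans_le hCA)).node_of_siblings hδ₀ hδ₁.le hAB hCD hxD
      (of_decide_eq_true hxB) hCA
  · obtain ⟨x, hxD, hxA⟩ := List.countP_pos_iff.mp hDA
    refine .node_comm ((ihB C hC (by exact_mod_cast hs.trans_le hCB)).node_of_siblings hδ₀ hδ₁.le
      (fun b hb a ha => (hAB a ha b hb).symm) hCD hxD (of_decide_eq_true hxA) ?_)
    rwa [← countLeavesIn_node_comm]

theorem hasLargeAgreementSubtree_of_isBalanced (hδ₀ : 0 < δ) (hδ₁ : δ < 1) {T₁ : RTree L}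
    (h₁ : T₁.IsPhylo) (hbal : T₁.IsBalanced) (h₂ : T₂.IsPhylo) (hk : 0 < T₂.countLeavesIn T₁) :
    HasLargeAgreementSubtree δ T₁.height T₁ T₂ := by
  induction T₁ generalizing T₂ with
  | leaf y =>
    obtain ⟨x, hx, hxy⟩ := List.countP_pos_iff.mp hk
    obtain rfl : x = y := by simpa [leafList] using hxy
    refine ⟨leaf x, ⟨List.nodup_singleton x, .leaf x, embeds_leaf_of_mem hx⟩, ?_⟩
    calc (1 - δ) ^ (leaf x).height * (T₂.countLeavesIn (leaf x) : ℝ)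
        ≤ 1 := by simpa [height] using countLeavesIn_leaf_le_one h₂ x
      _ ≤ 2 / δ := by rw [le_div_iff₀ hδ₀]; linarith
      _ = (2 / δ) ^ (leaf x).numLeaves := (pow_one _).symm
  | node A B ihA ihB =>
    obtain ⟨hA, hB, hAB⟩ := isPhylo_node.mp h₁
    obtain ⟨balA, balB, hheight⟩ := hbal
    rw [show (node A B).height = A.height + 1 by simp [height, hheight]]
    exact hasLargeAgreementSubtree_node hδ₀ hδ₁ hAB (fun _ hT hk => ihA hA balA hT hk)
      (fun _ hT hk => hheight ▸ ihB hB balB hT hk) h₂ hk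

end Counting

end RTree

open Real in
lemma logb_div_le_of_pow_mul_le {δ t : ℝ} {m n : ℕ} (hδ₀ : 0 < δ) (hδ₁ : δ < 1) (ht : 0 < t)
    (h : (1 - δ) ^ m * t ≤ (2 / δ) ^ n) :
    (m * logb 2 (1 - δ) + logb 2 t) / (1 - logb 2 δ) ≤ n := by
  have hpow : 0 < (1 - δ) ^ m := pow_pos (by linarith) m
  rw [div_le_iff₀ (by linarith [logb_neg one_lt_two hδ₀ hδ₁])]
  calc m * logb 2 (1 - δ) + logb 2 t = logb 2 ((1 - δ) ^ m * t) := by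
        rw [logb_mul hpow.ne' ht.ne', logb_pow]
    _ ≤ logb 2 ((2 / δ) ^ n) := logb_le_logb_of_le one_lt_two (mul_pos hpow ht) h
    _ = n * (1 - logb 2 δ) := by
        rw [logb_pow, logb_div two_ne_zero hδ₀.ne', logb_self_eq_one one_lt_two]

/-- If `T₁` is a rooted balanced binary phylogenetic tree on `2^m`
leaves and `T₂` is an arbitrary rooted binary phylogenetic tree on `t > 0` leaves with
`L(T₂) ⊆ L(T₁)`, then for every `δ ∈ (0, 1/2)`,
`mast{T₁,T₂} ≥ (m·log(1-δ) + log t) / (1 - log δ)` (logarithms base 2). -/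
theorem stmt_1 {L : Type} (m : ℕ) (T₁ T₂ : RTree L) (δ : ℝ)
    (h₁ : T₁.IsPhylo) (h₂ : T₂.IsPhylo)
    (hbal : T₁.IsBalanced) (hcard : T₁.numLeaves = 2 ^ m)
    (ht : 0 < T₂.numLeaves) (hsub : T₂.leafSet ⊆ T₁.leafSet)
    (hδ : δ ∈ Set.Ioo (0 : ℝ) (1/2)) :
    ((m : ℝ) * Real.logb 2 (1 - δ) + Real.logb 2 (T₂.numLeaves : ℝ)) / (1 - Real.logb 2 δ)
      ≤ (RTree.mast T₁ T₂ : ℝ) := by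
  classical
  obtain ⟨hδ₀, hδ₁⟩ := hδ
  have hheight : T₁.height = m :=
    Nat.pow_right_injective le_rfl ((RTree.numLeaves_eq_two_pow_height hbal).symm.trans hcard)
  have hk : T₂.countLeavesIn T₁ = T₂.numLeaves := RTree.countLeavesIn_eq_numLeaves hsub
  obtain ⟨S, hS, hbound⟩ :=
    RTree.hasLargeAgreementSubtree_of_isBalanced hδ₀ (by linarith) h₁ hbal h₂ (hk ▸ ht)
  rw [hheight, hk] at hbound
  calc _ ≤ (S.numLeaves : ℝ) :=
        logb_div_le_of_pow_mul_le hδ₀ (by linarith) (by exact_mod_cast ht) hbound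
    _ ≤ RTree.mast T₁ T₂ := by exact_mod_cast hS.numLeaves_le_mast
end

section
/- For integers 1 ≤ k ≤ h, let f(h,k) be the maximum number of leaves of a rooted binary tree of height at most h no restriction of which is a balanced rooted binary tree of height more than k. Then f(h,k) ≤ (2h)^k. -/
/-- `fExt h k` is the maximum number of leaves of a rooted binary (phylogenetic) tree of
height at most `h` no restriction of which is a balanced rooted binary tree of height
more than `k`.  (A restriction of `T` is any rooted binary tree `S` with `S ⪯ T`.) -/
noncomputable def fExt (h k : ℕ) : ℕ :=
  sSup {n | ∃ T : RTree ℕ, T.IsPhylo ∧ T.height ≤ h ∧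
    (∀ S : RTree ℕ, RTree.Embeds S T → S.IsBalanced → S.height ≤ k) ∧ T.numLeaves = n}


namespace RTree

variable {L : Type}

/-- The maximum height of a balanced tree embedding into `T`. -/
def maxbal : RTree L → ℕ
  | leaf _ => 0
  | node l r => max (max (maxbal l) (maxbal r)) (min (maxbal l) (maxbal r) + 1)

theorem embeds_refl : ∀ T : RTree L, Embeds T T
  | leaf b => .leaf b
  | node l r => .pair (embeds_refl l) (embeds_refl r)

theorem embeds_node_elim {s₁ s₂ T : RTree L} (h : Embeds (node s₁ s₂) T) :
    Embeds s₁ T ∧ Embeds s₂ T := by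
  induction T with
  | leaf b => cases h
  | node l r ihl ihr =>
    cases h with
    | left h => exact ⟨.left (ihl h).1, .left (ihl h).2⟩
    | right h => exact ⟨.right (ihr h).1, .right (ihr h).2⟩
    | pair h1 h2 => exact ⟨.left h1, .right h2⟩
    | pair_swap h1 h2 => exact ⟨.right h1, .left h2⟩

theorem height_le_maxbal {S T : RTree L} (h : Embeds S T) (hb : S.IsBalanced) :
    S.height ≤ T.maxbal := by
  induction h with
  | leaf b => simp [height, maxbal]
  | left h ih => have := ih hb; simp [maxbal]; omega
  | right h ih => have := ih hb; simp [maxbal]; omega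
  | pair h1 h2 ih1 ih2 =>
    obtain ⟨hb1, hb2, heq⟩ := hb
    have := ih1 hb1; have := ih2 hb2
    simp [height, maxbal]; omega
  | pair_swap h1 h2 ih1 ih2 =>
    obtain ⟨hb1, hb2, heq⟩ := hb
    have := ih1 hb1; have := ih2 hb2
    simp [height, maxbal]; omega

theorem exists_balanced_of_le {S T : RTree L} (hb : S.IsBalanced) (he : Embeds S T)
    {m : ℕ} (hm : m ≤ S.height) :
    ∃ S' : RTree L, S'.IsBalanced ∧ Embeds S' T ∧ S'.height = m := by
  induction S generalizing m T with
  | leaf b =>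
    simp [height] at hm
    exact ⟨leaf b, trivial, he, by simp [height, hm]⟩
  | node l r ihl ihr =>
    rcases eq_or_lt_of_le hm with heq | hlt
    · exact ⟨node l r, hb, he, heq.symm⟩
    · obtain ⟨hbl, hbr, hheq⟩ := hb
      have hml : m ≤ l.height := by simp [height] at hlt; omega
      exact ihl hbl (embeds_node_elim he).1 hml

theorem exists_balanced_maxbal :
    ∀ T : RTree L, ∃ S : RTree L, S.IsBalanced ∧ Embeds S T ∧ S.height = T.maxbal := by
  intro T
  induction T with
  | leaf b => exact ⟨leaf b, trivial, .leaf b, rfl⟩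
  | node l r ihl ihr =>
    obtain ⟨Sl, bl, el, hl⟩ := ihl
    obtain ⟨Sr, br, er, hr⟩ := ihr
    set a := l.maxbal with ha
    set b := r.maxbal with hbdef
    by_cases hc : min a b + 1 ≥ max a b
    · -- the max is min a b + 1
      obtain ⟨Sl', bl', el', hl'⟩ :=
        exists_balanced_of_le bl el (m := min a b) (by omega)
      obtain ⟨Sr', br', er', hr'⟩ :=
        exists_balanced_of_le br er (m := min a b) (by omega)
      refine ⟨node Sl' Sr', ⟨bl', br', by omega⟩, .pair el' er', ?_⟩
      show max Sl'.height Sr'.height + 1 = _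
      show _ = max (max a b) (min a b + 1)
      omega
    · rcases le_total a b with hab | hab
      · refine ⟨Sr, br, .right er, ?_⟩
        show _ = max (max a b) (min a b + 1)
        omega
      · refine ⟨Sl, bl, .left el, ?_⟩
        show _ = max (max a b) (min a b + 1)
        omega

theorem height_eq_zero {T : RTree L} (h : T.height = 0) : ∃ b, T = leaf b := by
  cases T with
  | leaf b => exact ⟨b, rfl⟩
  | node l r => simp [height] at h

theorem numLeaves_le_pow {T : RTree L} {h : ℕ} (hh : T.height ≤ h) :
    T.numLeaves ≤ (2 * h) ^ T.maxbal := by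
  induction T generalizing h with
  | leaf b => simp [numLeaves, leafList, maxbal]
  | node l r ihl ihr =>
    have h1 : 1 ≤ h := by
      have : 1 ≤ (node l r).height := by simp [height]
      omega
    obtain ⟨h', rfl⟩ : ∃ h', h = h' + 1 := ⟨h - 1, by omega⟩
    have hhl : l.height ≤ h' := by
      have : max l.height r.height + 1 ≤ h' + 1 := hh
      omega
    have hhr : r.height ≤ h' := by
      have : max l.height r.height + 1 ≤ h' + 1 := hh
      omega
    have hnl : (node l r).numLeaves = l.numLeaves + r.numLeaves := by
      simp [numLeaves, leafList]
    by_cases h0 : h' = 0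
    · subst h0
      obtain ⟨b1, rfl⟩ := height_eq_zero (Nat.le_zero.mp hhl)
      obtain ⟨b2, rfl⟩ := height_eq_zero (Nat.le_zero.mp hhr)
      simp [numLeaves, leafList, maxbal]
    · have Hl := ihl hhl
      have Hr := ihr hhr
      set a := l.maxbal
      set b := r.maxbal
      have hk : (node l r).maxbal = max (max a b) (min a b + 1) := rfl
      obtain ⟨m, hm⟩ : ∃ m, (node l r).maxbal = m + 1 := ⟨(node l r).maxbal - 1, by rw [hk]; omega⟩
      have hbase : 1 ≤ 2 * h' := by omega
      have hmax : (2 * h') ^ max a b ≤ (2 * h') ^ (m + 1) :=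
        Nat.pow_le_pow_right hbase (by omega)
      have hmin : (2 * h') ^ min a b ≤ (2 * h') ^ m :=
        Nat.pow_le_pow_right hbase (by omega)
      have hsum : (2 * h') ^ a + (2 * h') ^ b
          ≤ (2 * h') ^ (m + 1) + (2 * h') ^ m := by
        rcases le_total a b with hab | hab
        · have e1 : max a b = b := by omega
          have e2 : min a b = a := by omega
          rw [e1] at hmax; rw [e2] at hmin; omega
        · have e1 : max a b = a := by omega
          have e2 : min a b = b := by omega
          rw [e1] at hmax; rw [e2] at hmin; omega
      have key : (2 * h') ^ (m + 1) + (2 * h') ^ m ≤ (2 * (h' + 1)) ^ (m + 1) := by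
        have : (2 * h') ^ (m + 1) + (2 * h') ^ m = (2 * h') ^ m * (2 * h' + 1) := by
          ring
        rw [this]
        have h2 : 2 * (h' + 1) = 2 * h' + 2 := by ring
        rw [h2, pow_succ]
        exact Nat.mul_le_mul (Nat.pow_le_pow_left (by omega) m) (by omega)
      calc (node l r).numLeaves = l.numLeaves + r.numLeaves := hnl
        _ ≤ (2 * h') ^ a + (2 * h') ^ b := Nat.add_le_add Hl Hr
        _ ≤ (2 * h') ^ (m + 1) + (2 * h') ^ m := hsum
        _ ≤ (2 * (h' + 1)) ^ (m + 1) := key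
        _ = (2 * (h' + 1)) ^ (node l r).maxbal := by rw [hm]

end RTree

/-- For `1 ≤ k ≤ h`, `f(h,k) ≤ (2h)^k`. -/
theorem stmt_7 (h k : ℕ) (hk1 : 1 ≤ k) (hkh : k ≤ h) : fExt h k ≤ (2 * h) ^ k := by
  apply csSup_le'
  rintro n ⟨T, -, hTh, hS, rfl⟩
  have hmb : T.maxbal ≤ k := by
    obtain ⟨S, hb, he, hht⟩ := RTree.exists_balanced_maxbal T
    rw [← hht]
    exact hS S he hb
  calc T.numLeaves ≤ (2 * h) ^ T.maxbal := RTree.numLeaves_le_pow hTh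
    _ ≤ (2 * h) ^ k := Nat.pow_le_pow_right (by omega) hmb
end
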